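/- Let G be a context-free grammar in Chomsky normal form with terminals Γ generating a word a1⋯an with n ≥ 2, and let t be any 2-ary term over {a,c}. Then there exists an n-ary term s ∈ t* such that the tree s(a1,…,an) belongs to kop(G). -/

import Mathlib

inductive Term (σ : Type) : Type
  | port : Term σ
  | node : σ → List (Term σ) → Term σ

namespace Term

variable {σ : Type}

def ports : Term σ → ℕ
  | .port => 1
  | .node _ ts => (ts.attach.map fun x => ports x.1).sum
decreasing_by
  simp_wf
  have := List.sizeOf_lt_of_mem x.2
  omega

def size : Term σ → ℕ
  | .port => 1
  | .node _ ts => 1 + (ts.attach.map fun x => size x.1).sum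
decreasing_by
  simp_wf
  have := List.sizeOf_lt_of_mem x.2
  omega

def WF (ar : σ → ℕ) : Term σ → Prop
  | .port => True
  | .node a ts => ts.length = ar a ∧ ∀ t ∈ ts.attach, WF ar t.1
decreasing_by
  simp_wf
  have := List.sizeOf_lt_of_mem t.2
  omega

mutual
def subst1 : Term σ → List (Term σ) → Term σ × List (Term σ)
  | .port, l => (l.headD .port, l.tail)
  | .node a ts, l => let p := substL ts l; (.node a p.1, p.2)
def substL : List (Term σ) → List (Term σ) → List (Term σ) × List (Term σ)
  | [], l => ([], l)
  | t :: ts, l => let p := subst1 t l; let q := substL ts p.2; (p.1 :: q.1, q.2)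
end

/-- Substitute the terms `l` for the ports of `t`, in left-to-right order. -/
def subst (t : Term σ) (l : List (Term σ)) : Term σ := (subst1 t l).1

def eval {Q : Type} (δ : σ → List Q → Q) (q0 : Q) : Term σ → Q
  | .port => q0
  | .node a ts => δ a (ts.attach.map fun x => eval δ q0 x.1)
decreasing_by
  simp_wf
  have := List.sizeOf_lt_of_mem x.2
  omega

end Term

inductive TStar {σ : Type} (t : Term σ) : Term σ → Prop
  | base : TStar t Term.port
  | step {u v : Term σ} : TStar t u → TStar t v → TStar t (t.subst [u, v])

def LEquiv {σ : Type} (ar : σ → ℕ) (L : Set (Term σ)) (n : ℕ) (u u' : Term σ) : Prop :=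
  u.ports = n ∧ u'.ports = n ∧
  ∀ s : Term σ, s.ports = 1 → s.WF ar →
    ∀ l : List (Term σ), l.length = n → (∀ x ∈ l, x.ports = 0 ∧ x.WF ar) →
      (s.subst [u.subst l] ∈ L ↔ s.subst [u'.subst l] ∈ L)

def RegularTree {σ : Type} (ar : σ → ℕ) (L : Set (Term σ)) : Prop :=
  ∃ (Q : Type) (_ : Finite Q) (δ : σ → List Q → Q) (q0 : Q) (F : Set Q),
    L = {u | u.ports = 0 ∧ u.WF ar ∧ u.eval δ q0 ∈ F}

def RegularWord {Γ : Type} (K : Set (List Γ)) : Prop :=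
  ∃ (Q : Type) (_ : Fintype Q) (M : DFA Γ Q), K = M.accepts

/-- A context-free grammar in Chomsky normal form: rules `A → B C` and `A → σ`. -/
structure CNF (Γ N : Type) where
  start : N
  rule2 : N → N → N → Prop
  rule1 : N → Γ → Prop

/-- Derivation trees: internal nodes labeled by nonterminals, leaves by terminals. -/
inductive DTree (Γ N : Type) : Type
  | leaf : Γ → DTree Γ N
  | node : N → DTree Γ N → DTree Γ N → DTree Γ N

def DTree.yield {Γ N : Type} : DTree Γ N → List Γ
  | .leaf a => [a]
  | .node _ l r => l.yield ++ r.yield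

/-- `IsDeriv G d A`: `d` is a derivation tree of `G` from nonterminal `A`. -/
def IsDeriv {Γ N : Type} (G : CNF Γ N) : DTree Γ N → N → Prop
  | .leaf a, A => G.rule1 A a
  | .node B l r, A => B = A ∧ ∃ C D, G.rule2 A C D ∧ IsDeriv G l C ∧ IsDeriv G r D

/-- The word language generated by `G`. -/
def CNF.lang {Γ N : Type} (G : CNF Γ N) : Set (List Γ) :=
  {w | ∃ d : DTree Γ N, IsDeriv G d G.start ∧ d.yield = w}

/-- The ranked alphabet `Γ ∪ {a, c}`: `Sum.inr true` is the binary letter `a`,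
`Sum.inr false` is the nullary letter `c`, and letters of `Γ` have arity 0. -/
abbrev KLetter (Γ : Type) := Γ ⊕ Bool

def arK {Γ : Type} : KLetter Γ → ℕ
  | .inr true => 2
  | _ => 0

/-- All labels of the term are among `{a, c}`. -/
def OnlyAC {Γ : Type} : Term (KLetter Γ) → Prop
  | .port => True
  | .node x ts => (∃ b : Bool, x = .inr b) ∧ ∀ u ∈ ts.attach, OnlyAC u.1
decreasing_by
  simp_wf
  have := List.sizeOf_lt_of_mem u.2
  omega

def leafT {Γ : Type} (g : Γ) : Term (KLetter Γ) := .node (.inl g) []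

/-- `KopD d u`: `u` is obtained from the derivation tree `d` by replacing each
nonterminal occurrence by some 2-ary term over `{a, c}`. -/
inductive KopD {Γ N : Type} : DTree Γ N → Term (KLetter Γ) → Prop
  | leaf (g : Γ) : KopD (.leaf g) (leafT g)
  | node (A : N) (l r : DTree Γ N) (s u v : Term (KLetter Γ)) :
      s.ports = 2 → s.WF arK → OnlyAC s → KopD l u → KopD r v →
      KopD (.node A l r) (s.subst [u, v])

/-- The Kopczyński obfuscation of `G`. -/
def kopLang {Γ N : Type} (G : CNF Γ N) : Set (Term (KLetter Γ)) :=
  {u | ∃ d : DTree Γ N, IsDeriv G d G.start ∧ KopD d u}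

/-- The left-to-right word of `Γ`-labeled leaves of a tree over `Γ ∪ {a,c}`. -/
def gyield {Γ : Type} : Term (KLetter Γ) → List Γ
  | .port => []
  | .node (.inl g) _ => [g]
  | .node (.inr _) ts => (ts.attach.map fun x => gyield x.1).flatten
decreasing_by
  simp_wf
  have := List.sizeOf_lt_of_mem x.2
  omega

/-!
Induction on a derivation tree: a leaf `a` is `*(a)`, and at an inner node whose subtrees
yield `u` and `v` and carry `s₁, s₂ ∈ t*`, replace the nonterminal by `t` itself and take
`t(s₁, s₂) ∈ t*`. The only computation is `t(s₁, s₂)(u ++ v) = t(s₁(u), s₂(v))`, associativity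
of substitution, valid because `s₁` has exactly `|u|` ports.
-/

theorem List.exists_eq_append_of_length_eq_add {α : Type*} {l : List α} {m n : ℕ}
    (h : l.length = m + n) : ∃ A B : List α, l = A ++ B ∧ A.length = m ∧ B.length = n :=
  ⟨l.take m, l.drop m, (List.take_append_drop _ _).symm,
    by rw [List.length_take]; omega, by rw [List.length_drop]; omega⟩

namespace Term

variable {σ : Type}

lemma ports_node (a : σ) (ts : List (Term σ)) :
    (node a ts).ports = (ts.map ports).sum := by
  rw [ports]; simp

lemma subst1_port (l : List (Term σ)) : subst1 (port : Term σ) l = (l.headD port, l.tail) := by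
  rw [subst1]

lemma subst1_node (a : σ) (ts l : List (Term σ)) :
    subst1 (node a ts) l = (node a (substL ts l).1, (substL ts l).2) := by
  rw [subst1]

lemma substL_nil (l : List (Term σ)) : substL ([] : List (Term σ)) l = ([], l) := by
  rw [substL]

lemma substL_cons (t : Term σ) (ts l : List (Term σ)) :
    substL (t :: ts) l =
      ((subst1 t l).1 :: (substL ts (subst1 t l).2).1, (substL ts (subst1 t l).2).2) := by
  rw [substL]

lemma subst_port (u : Term σ) : port.subst [u] = u := by
  rw [subst, subst1_port]; rfl

lemma substL_length (ts l : List (Term σ)) : (substL ts l).1.length = ts.length := by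
  induction ts generalizing l with
  | nil => rw [substL_nil]
  | cons t ts ih => rw [substL_cons]; simp [ih]

lemma substL_append (ts₁ ts₂ m : List (Term σ)) :
    substL (ts₁ ++ ts₂) m =
      ((substL ts₁ m).1 ++ (substL ts₂ (substL ts₁ m).2).1,
       (substL ts₂ (substL ts₁ m).2).2) := by
  induction ts₁ generalizing m with
  | nil => rw [substL_nil]; simp
  | cons t ts ih => rw [List.cons_append, substL_cons, substL_cons, ih]; simp

mutual

theorem subst1_append_of_length : ∀ (t : Term σ) (l₁ l₂ : List (Term σ)),
    l₁.length = t.ports → subst1 t (l₁ ++ l₂) = ((subst1 t l₁).1, l₂)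
  | .port, l₁, l₂, h => by
      obtain ⟨x, rfl⟩ := List.length_eq_one_iff.mp (by rw [h, ports])
      simp [subst1_port]
  | .node a ts, l₁, l₂, h => by
      rw [ports_node] at h
      rw [subst1_node, subst1_node, substL_append_of_length ts l₁ l₂ h]

theorem substL_append_of_length : ∀ (ts l₁ l₂ : List (Term σ)),
    l₁.length = (ts.map ports).sum → substL ts (l₁ ++ l₂) = ((substL ts l₁).1, l₂)
  | [], l₁, l₂, h => by
      rw [List.length_eq_zero_iff.mp h]
      simp [substL_nil]
  | t :: ts, l₁, l₂, h => by
      rw [List.map_cons, List.sum_cons] at h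
      obtain ⟨A, B, rfl, hA, hB⟩ := List.exists_eq_append_of_length_eq_add h
      rw [List.append_assoc, substL_cons, substL_cons, subst1_append_of_length t A _ hA,
        subst1_append_of_length t A B hA]
      dsimp only
      rw [substL_append_of_length ts B l₂ hB]

end

mutual

theorem ports_subst1 : ∀ (t : Term σ) (l : List (Term σ)), l.length = t.ports →
    (subst1 t l).1.ports = (l.map ports).sum
  | .port, l, h => by
      obtain ⟨x, rfl⟩ := List.length_eq_one_iff.mp (by rw [h, ports])
      simp [subst1_port]
  | .node a ts, l, h => by
      rw [ports_node] at h
      rw [subst1_node, ports_node]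
      exact ports_substL ts l h

theorem ports_substL : ∀ (ts l : List (Term σ)), l.length = (ts.map ports).sum →
    ((substL ts l).1.map ports).sum = (l.map ports).sum
  | [], l, h => by
      rw [List.length_eq_zero_iff.mp h, substL_nil]
  | t :: ts, l, h => by
      rw [List.map_cons, List.sum_cons] at h
      obtain ⟨A, B, rfl, hA, hB⟩ := List.exists_eq_append_of_length_eq_add h
      rw [substL_cons, subst1_append_of_length t A B hA]
      simp only [List.map_cons, List.sum_cons, List.map_append, List.sum_append]
      rw [ports_subst1 t A hA, ports_substL ts B hB]

end

mutual

theorem subst1_subst1 : ∀ (t : Term σ) (l m : List (Term σ)), l.length = t.ports →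
    subst1 (subst1 t l).1 m = ((subst1 t (substL l m).1).1, (substL l m).2)
  | .port, l, m, h => by
      obtain ⟨x, rfl⟩ := List.length_eq_one_iff.mp (by rw [h, ports])
      simp [subst1_port, substL_cons, substL_nil]
  | .node a ts, l, m, h => by
      rw [ports_node] at h
      simp only [subst1_node, substL_substL ts l m h]

theorem substL_substL : ∀ (ts l m : List (Term σ)), l.length = (ts.map ports).sum →
    substL (substL ts l).1 m = ((substL ts (substL l m).1).1, (substL l m).2)
  | [], l, m, h => by
      rw [List.length_eq_zero_iff.mp h]
      simp [substL_nil]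
  | t :: ts, l, m, h => by
      rw [List.map_cons, List.sum_cons] at h
      obtain ⟨A, B, rfl, hA, hB⟩ := List.exists_eq_append_of_length_eq_add h
      have hA' : (substL A m).1.length = t.ports := by rw [substL_length, hA]
      simp only [substL_append A B m, substL_cons, subst1_append_of_length t A B hA,
        subst1_subst1 t A m hA, substL_substL ts B _ hB,
        subst1_append_of_length t _ _ hA']

end

theorem ports_subst {t : Term σ} {l : List (Term σ)} (h : l.length = t.ports) :
    (t.subst l).ports = (l.map ports).sum :=
  ports_subst1 t l h

theorem subst_subst {t : Term σ} {l : List (Term σ)} (h : l.length = t.ports)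
    (m : List (Term σ)) : (t.subst l).subst m = t.subst (substL l m).1 := by
  rw [subst, subst, subst, subst1_subst1 t l m h]

theorem substL_pair_append {u : Term σ} {l₁ : List (Term σ)} (h : l₁.length = u.ports)
    (v : Term σ) (l₂ : List (Term σ)) :
    (substL [u, v] (l₁ ++ l₂)).1 = [u.subst l₁, v.subst l₂] := by
  simp only [substL_cons, substL_nil, subst1_append_of_length u l₁ l₂ h]
  rfl

end Term

theorem exists_tstar_kopD {Γ N : Type} {t : Term (KLetter Γ)} (ht : t.ports = 2)
    (htwf : t.WF arK) (hac : OnlyAC t) (d : DTree Γ N) :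
    ∃ s : Term (KLetter Γ), TStar t s ∧ s.ports = d.yield.length ∧
      KopD d (s.subst (d.yield.map leafT)) := by
  induction d with
  | leaf g =>
      refine ⟨.port, .base, by simp [Term.ports, DTree.yield], ?_⟩
      rw [DTree.yield, List.map_singleton, Term.subst_port]
      exact .leaf g
  | node A l r ihl ihr =>
      obtain ⟨s₁, hs₁, hp₁, hk₁⟩ := ihl
      obtain ⟨s₂, hs₂, hp₂, hk₂⟩ := ihr
      have hlen : [s₁, s₂].length = t.ports := by simp [ht]
      refine ⟨t.subst [s₁, s₂], .step hs₁ hs₂, ?_, ?_⟩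
      · simp [Term.ports_subst hlen, hp₁, hp₂, DTree.yield]
      · have hsplit : (l.yield.map leafT).length = s₁.ports := by simp [hp₁]
        rw [DTree.yield, List.map_append, Term.subst_subst hlen,
          Term.substL_pair_append hsplit]
        exact .node A l r t _ _ ht htwf hac hk₁ hk₂

/-- If `G` generates `a₁⋯aₙ` with `n ≥ 2` and `t` is a 2-ary term over `{a,c}`, then
there is an `n`-ary term `s ∈ t*` with `s(a₁,…,aₙ) ∈ kop(G)`. -/
theorem kop_contains_tstar_term {Γ N : Type} (G : CNF Γ N) (w : List Γ)
    (hw : w ∈ G.lang) (h2 : 2 ≤ w.length)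
    (t : Term (KLetter Γ)) (ht : t.ports = 2) (htwf : t.WF arK) (hac : OnlyAC t) :
    ∃ s : Term (KLetter Γ), TStar t s ∧ s.ports = w.length ∧
      s.subst (w.map leafT) ∈ kopLang G := by
  obtain ⟨d, hd, rfl⟩ := hw
  obtain ⟨s, hst, hp, hk⟩ := exists_tstar_kopD ht htwf hac d
  exact ⟨s, hst, hp, d, hd, hk⟩
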